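/- arXiv:2301.09530 — 2 statements merged into one kernel-verified Lean document; each statement's English description precedes it below -/
import Mathlib

section
/- Let π ∈ S_n be a rectangular permutation. Then ρ_{1,1}(π) and ρ_{1,2}(π) are rectangular; and if n ≥ 1, then ρ_{π_1,1}(π) and ρ_{π_1+1,1}(π) are rectangular, where π_1 is the first value of π in one-line notation. -/
/-- `w` contains the pattern `p` (both given in one-line notation):
there is a subsequence of `w` whose entries are in the same relative order
as the entries of `p`. -/
def ContainsPattern (w p : List ℕ) : Prop :=
  ∃ s : List ℕ, s.Sublist w ∧ s.length = p.length ∧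
    ∀ a b : ℕ, a < p.length → b < p.length →
      (s.getD a 0 < s.getD b 0 ↔ p.getD a 0 < p.getD b 0)

/-- `w` avoids the pattern `p`. -/
def Avoids (w p : List ℕ) : Prop := ¬ ContainsPattern w p

/-- `w` is the one-line notation of a permutation of `{1, …, n}`. -/
def IsPermList (n : ℕ) (w : List ℕ) : Prop := w.Perm (List.range' 1 n)

/-- A permutation is rectangular if it avoids 2413, 2431, 4213 and 4231. -/
def Rectangular (w : List ℕ) : Prop :=
  Avoids w [2,4,1,3] ∧ Avoids w [2,4,3,1] ∧ Avoids w [4,2,1,3] ∧ Avoids w [4,2,3,1]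

/-- A permutation is evil-avoiding if it avoids 2413, 4132, 4213 and 3214. -/
def EvilAvoiding (w : List ℕ) : Prop :=
  Avoids w [2,4,1,3] ∧ Avoids w [4,1,3,2] ∧ Avoids w [4,2,1,3] ∧ Avoids w [3,2,1,4]

/-- The number of recoils of `w`: the number of values `i ∈ {1,…,n-1}`
that occur after `i+1` in the one-line notation `w`. -/
def recoils (w : List ℕ) : ℕ :=
  ((Finset.Icc 1 (w.length - 1)).filter (fun i => w.idxOf (i+1) < w.idxOf i)).card

/-- The insertion operator ρ_{i,j} (with 1-indexed position `j`): increment by 1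
every value of `w` that is ≥ i, then insert the value `i` in position `j`. -/
def insOp (i j : ℕ) (w : List ℕ) : List ℕ :=
  List.insertIdx (w.map (fun v => if i ≤ v then v + 1 else v)) (j-1) i

/-!
A permutation is rectangular exactly when it has no entries `a, b, c, d` (in this order) with
`min c d < min a b < max c d < max a b`. In such a quadruple neither `a` nor `b` is the smallest
of the four values, so a new minimum inserted in position 1 or 2 creates none. A value inserted
in front of `π₁` and adjacent to it in value creates none either: no other value lies between the
two, so in any quadruple through the new value, `π₁` can take its place.
-/

def Interleaved (a b c d : ℕ) : Prop :=
  min c d < min a b ∧ min a b < max c d ∧ max c d < max a b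

def HasInterleavedQuad (w : List ℕ) : Prop :=
  ∃ a b c d : ℕ, [a, b, c, d].Sublist w ∧ Interleaved a b c d

theorem containsPattern_four_iff {w : List ℕ} {p₀ p₁ p₂ p₃ : ℕ} :
    ContainsPattern w [p₀, p₁, p₂, p₃] ↔ ∃ a b c d : ℕ, [a, b, c, d].Sublist w ∧
      ∀ x < 4, ∀ y < 4, ([a, b, c, d].getD x 0 < [a, b, c, d].getD y 0 ↔
        [p₀, p₁, p₂, p₃].getD x 0 < [p₀, p₁, p₂, p₃].getD y 0) := by
  constructor
  · rintro ⟨s, hs, hlen, hcmp⟩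
    match s, hlen with
    | [a, b, c, d], _ => exact ⟨a, b, c, d, hs, fun x hx y hy => hcmp x y hx hy⟩
  · rintro ⟨a, b, c, d, hs, hcmp⟩
    exact ⟨[a, b, c, d], hs, rfl, fun x y hx hy => hcmp x hx y hy⟩

theorem rectangular_iff_not_hasInterleavedQuad (w : List ℕ) :
    Rectangular w ↔ ¬ HasInterleavedQuad w := by
  simp only [Rectangular, Avoids, containsPattern_four_iff, HasInterleavedQuad,
    ← not_or, ← exists_or, ← and_or_left]
  refine not_congr <| exists_congr fun a => exists_congr fun b => exists_congr fun c =>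
    exists_congr fun d => and_congr_right fun _ => ?_
  simp only [Nat.forall_lt_succ_right, Nat.not_lt_zero, IsEmpty.forall_iff, forall_const,
    true_and, List.getD_cons_zero, List.getD_cons_succ, lt_self_iff_false, iff_self, Nat.reduceLT,
    iff_true, iff_false, not_lt, and_true, Interleaved]
  constructor
  · rintro (h | h | h | h) <;> omega
  · rintro ⟨h₁, h₂, h₃⟩
    rcases le_total a b with hab | hab <;> rcases le_total c d with hcd | hcd <;>
      simp only [min_eq_left, min_eq_right, max_eq_left, max_eq_right, hab, hcd] at h₁ h₂ h₃
    exacts [Or.inl (by omega), Or.inr (Or.inl (by omega)), Or.inr (Or.inr (Or.inl (by omega))),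
      Or.inr (Or.inr (Or.inr (by omega)))]

theorem Interleaved.of_strictMono {f : ℕ → ℕ} (hf : StrictMono f) {a b c d : ℕ}
    (h : Interleaved (f a) (f b) (f c) (f d)) : Interleaved a b c d := by
  simpa only [Interleaved, ← hf.monotone.map_max, ← hf.monotone.map_min, hf.lt_iff_lt] using h

theorem Rectangular.map {f : ℕ → ℕ} (hf : StrictMono f) {w : List ℕ} (h : Rectangular w) :
    Rectangular (w.map f) := by
  rw [rectangular_iff_not_hasInterleavedQuad] at h ⊢
  rintro ⟨a, b, c, d, hs, hq⟩
  obtain ⟨l, hl, hfl⟩ := List.sublist_map_iff.mp hs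
  simp only [eq_comm (a := [a, b, c, d]), List.map_eq_cons_iff, List.map_eq_nil_iff] at hfl
  obtain ⟨a', -, rfl, rfl, b', -, rfl, rfl, c', -, rfl, rfl, d', -, rfl, rfl, rfl⟩ := hfl
  exact h ⟨a', b', c', d', hl, hq.of_strictMono hf⟩

theorem Rectangular.cons_of_le {x : ℕ} {l : List ℕ} (hx : ∀ y ∈ l, x ≤ y) (h : Rectangular l) :
    Rectangular (x :: l) := by
  rw [rectangular_iff_not_hasInterleavedQuad] at h ⊢
  rintro ⟨a, b, c, d, hs, hq⟩
  cases hs with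
  | cons _ hs => exact h ⟨a, b, c, d, hs, hq⟩
  | cons_cons _ hs =>
    exact (hq.1.trans_le (min_le_left x b)).not_ge
      (le_min (hx c (hs.mem (by simp))) (hx d (hs.mem (by simp))))

theorem Rectangular.cons_cons_of_le {x y : ℕ} {l : List ℕ} (hx : ∀ z ∈ l, x ≤ z)
    (h : Rectangular (y :: l)) : Rectangular (y :: x :: l) := by
  rw [rectangular_iff_not_hasInterleavedQuad] at h ⊢
  rintro ⟨a, b, c, d, hs, hq⟩
  cases hs with
  | cons _ hs =>
    cases hs with
    | cons _ hs => exact h ⟨a, b, c, d, hs.cons y, hq⟩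
    | cons_cons _ hs =>
      exact (hq.1.trans_le (min_le_left x b)).not_ge
        (le_min (hx c (hs.mem (by simp))) (hx d (hs.mem (by simp))))
  | cons_cons _ hs =>
    cases hs with
    | cons _ hs => exact h ⟨y, b, c, d, hs.cons_cons y, hq⟩
    | cons_cons _ hs =>
      exact (hq.1.trans_le (min_le_right y x)).not_ge
        (le_min (hx c (hs.mem (by simp))) (hx d (hs.mem (by simp))))

theorem Rectangular.cons_of_adjacent {i y : ℕ} {l : List ℕ} (hadj : y = i + 1 ∨ i = y + 1)
    (hi : i ∉ l) (hy : y ∉ l) (h : Rectangular (y :: l)) : Rectangular (i :: y :: l) := by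
  rw [rectangular_iff_not_hasInterleavedQuad] at h ⊢
  rintro ⟨a, b, c, d, hs, hq⟩
  unfold Interleaved at hq
  cases hs with
  | cons _ hs => exact h ⟨a, b, c, d, hs, hq⟩
  | cons_cons _ hs =>
    cases hs with
    | cons_cons _ hs => omega
    | cons _ hs =>
      have hb : b ∈ l := hs.mem (by simp)
      have hc : c ∈ l := hs.mem (by simp)
      have hd : d ∈ l := hs.mem (by simp)
      have : b ≠ i ∧ c ≠ i ∧ d ≠ i := ⟨ne_of_mem_of_not_mem hb hi, ne_of_mem_of_not_mem hc hi,
        ne_of_mem_of_not_mem hd hi⟩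
      have : b ≠ y ∧ c ≠ y ∧ d ≠ y := ⟨ne_of_mem_of_not_mem hb hy, ne_of_mem_of_not_mem hc hy,
        ne_of_mem_of_not_mem hd hy⟩
      exact h ⟨y, b, c, d, hs.cons_cons y, by unfold Interleaved; omega⟩

def shiftFrom (i v : ℕ) : ℕ := if i ≤ v then v + 1 else v

theorem strictMono_shiftFrom (i : ℕ) : StrictMono (shiftFrom i) := by
  intro p q h
  unfold shiftFrom
  split_ifs <;> omega

theorem shiftFrom_ne (i v : ℕ) : shiftFrom i v ≠ i := by
  unfold shiftFrom
  split_ifs <;> omega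

theorem insOp_one (i : ℕ) (w : List ℕ) : insOp i 1 w = i :: w.map (shiftFrom i) := by
  simp [insOp, shiftFrom]

theorem insOp_two_cons (i x : ℕ) (t : List ℕ) :
    insOp i 2 (x :: t) = shiftFrom i x :: i :: t.map (shiftFrom i) := by
  simp [insOp, shiftFrom]

theorem Rectangular.insOp_head {i x : ℕ} {t : List ℕ} (hx : x ∉ t) (hi : i = x ∨ i = x + 1)
    (h : Rectangular (x :: t)) : Rectangular (insOp i 1 (x :: t)) := by
  have hmap := h.map (strictMono_shiftFrom i)
  rw [List.map_cons] at hmap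
  rw [insOp_one, List.map_cons]
  refine hmap.cons_of_adjacent ?_ (by simp [shiftFrom_ne]) ?_
  · unfold shiftFrom
    split_ifs <;> omega
  · rwa [List.mem_map_of_injective (strictMono_shiftFrom i).injective]

/-- If `π` is a rectangular permutation in `S_n`, then `ρ_{1,1}(π)` and `ρ_{1,2}(π)`
are rectangular, and if `n ≥ 1` then `ρ_{π₁,1}(π)` and `ρ_{π₁+1,1}(π)` are
rectangular, where `π₁ = w.headI` is the first value of `π`. -/
theorem insOp_rectangular (n : ℕ) (w : List ℕ) (hperm : IsPermList n w)
    (hrect : Rectangular w) :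
    Rectangular (insOp 1 1 w) ∧ Rectangular (insOp 1 2 w) ∧
      (1 ≤ n → Rectangular (insOp w.headI 1 w) ∧ Rectangular (insOp (w.headI + 1) 1 w)) := by
  have hpos : ∀ v ∈ w, 1 ≤ v := fun v hv => (List.mem_range'_1.mp (hperm.mem_iff.mp hv)).1
  have hmap := hrect.map (strictMono_shiftFrom 1)
  have hmap_pos : ∀ v ∈ w.map (shiftFrom 1), 1 ≤ v :=
    List.forall_mem_map.mpr fun v hv => by simp [shiftFrom, hpos v hv]
  refine ⟨?_, ?_, fun hn => ?_⟩
  · rw [insOp_one]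
    exact hmap.cons_of_le hmap_pos
  · cases w with
    | nil => simpa [insOp] using hrect
    | cons x t =>
      rw [insOp_two_cons]
      rw [List.map_cons] at hmap hmap_pos
      exact hmap.cons_cons_of_le fun v hv => hmap_pos v (List.mem_cons_of_mem _ hv)
  · have hlen : 0 < w.length := by rw [hperm.length_eq, List.length_range']; omega
    obtain ⟨x, t, rfl⟩ := List.exists_cons_of_length_pos hlen
    have hx : x ∉ t := (List.nodup_cons.mp (hperm.nodup_iff.mpr (List.nodup_range' 1))).1
    exact ⟨hrect.insOp_head hx (.inl rfl), hrect.insOp_head hx (.inr rfl)⟩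
end

section
/- Every rectangular permutation π ∈ S_n with n ≥ 2 satisfies at least one of the following: π_1 = 1, or π_2 = 1, or |π_1 − π_2| = 1, where π_1 and π_2 are the first two values of π in one-line notation. -/
/-! If neither of the first two values `a, b` is `1` and they are not adjacent, then `1` and
`min a b + 1` both occur later in the permutation; together with `a, b` they form one of the
patterns 2413, 2431, 4213, 4231, according to the order of `a, b` and of the two later values. -/

theorem List.pair_sublist_or_pair_sublist_of_mem {α : Type*} {x y : α} {l : List α}
    (hx : x ∈ l) (hy : y ∈ l) (hxy : x ≠ y) : [x, y].Sublist l ∨ [y, x].Sublist l := by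
  induction l with
  | nil => simp at hx
  | cons z l ih =>
    rcases List.mem_cons.1 hx with rfl | hx'
    · have hy' : y ∈ l := (List.mem_cons.1 hy).resolve_left hxy.symm
      exact .inl ((List.singleton_sublist.2 hy').cons_cons x)
    rcases List.mem_cons.1 hy with rfl | hy'
    · exact .inr ((List.singleton_sublist.2 hx').cons_cons y)
    exact (ih hx' hy').imp (·.cons z) (·.cons z)

theorem IsPermList.mem_iff {n : ℕ} {w : List ℕ} (h : IsPermList n w) {v : ℕ} :
    v ∈ w ↔ 1 ≤ v ∧ v ≤ n := by
  rw [List.Perm.mem_iff h, List.mem_range'_1]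
  omega

theorem IsPermList.nodup {n : ℕ} {w : List ℕ} (h : IsPermList n w) : w.Nodup :=
  h.nodup_iff.2 List.nodup_range'

theorem containsPattern_of_map_sublist {w p : List ℕ} {f : ℕ → ℕ}
    (hf : StrictMonoOn f {v | v ∈ p}) (hs : (p.map f).Sublist w) : ContainsPattern w p := by
  refine ⟨p.map f, hs, List.length_map f, fun i j hi hj => ?_⟩
  have hi' : i < (p.map f).length := by simpa using hi
  have hj' : j < (p.map f).length := by simpa using hj
  rw [List.getD_eq_getElem _ _ hi', List.getD_eq_getElem _ _ hj', List.getD_eq_getElem _ _ hi,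
    List.getD_eq_getElem _ _ hj, List.getElem_map, List.getElem_map]
  exact hf.lt_iff_lt (List.getElem_mem hi) (List.getElem_mem hj)

def fourValues (v₁ v₂ v₃ v₄ k : ℕ) : ℕ :=
  if k ≤ 1 then v₁ else if k ≤ 2 then v₂ else if k ≤ 3 then v₃ else v₄

theorem strictMonoOn_fourValues {v₁ v₂ v₃ v₄ : ℕ} (h₁ : v₁ < v₂) (h₂ : v₂ < v₃) (h₃ : v₃ < v₄) :
    StrictMonoOn (fourValues v₁ v₂ v₃ v₄) (Set.Icc 1 4) := by
  intro k hk l hl hkl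
  simp only [Set.mem_Icc] at hk hl
  unfold fourValues
  split_ifs <;> omega

theorem containsPattern_of_map_fourValues_sublist {w p : List ℕ} {v₁ v₂ v₃ v₄ : ℕ}
    (hp : ∀ k ∈ p, 1 ≤ k ∧ k ≤ 4) (h₁ : v₁ < v₂) (h₂ : v₂ < v₃) (h₃ : v₃ < v₄)
    (hs : (p.map (fourValues v₁ v₂ v₃ v₄)).Sublist w) : ContainsPattern w p :=
  containsPattern_of_map_sublist ((strictMonoOn_fourValues h₁ h₂ h₃).mono hp) hs

theorem Rectangular.not_straddled_head {a b c d : ℕ} {t : List ℕ}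
    (h : Rectangular (a :: b :: t)) (hc : c ∈ t) (hd : d ∈ t)
    (hca : c < min a b) (hda : min a b < d) (hdb : d < max a b) : False := by
  obtain ⟨h2413, h2431, h4213, h4231⟩ := h
  have hcd : c ≠ d := (hca.trans hda).ne
  rcases lt_or_gt_of_ne (min_lt_max.1 (hda.trans hdb)) with hab | hab
  · rw [min_eq_left hab.le] at hca hda
    rw [max_eq_right hab.le] at hdb
    rcases List.pair_sublist_or_pair_sublist_of_mem hc hd hcd with hs | hs
    · exact h2413 (containsPattern_of_map_fourValues_sublist (by decide)
        hca hda hdb ((hs.cons_cons b).cons_cons a))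
    · exact h2431 (containsPattern_of_map_fourValues_sublist (by decide)
        hca hda hdb ((hs.cons_cons b).cons_cons a))
  · rw [min_eq_right hab.le] at hca hda
    rw [max_eq_left hab.le] at hdb
    rcases List.pair_sublist_or_pair_sublist_of_mem hc hd hcd with hs | hs
    · exact h4213 (containsPattern_of_map_fourValues_sublist (by decide)
        hca hda hdb ((hs.cons_cons b).cons_cons a))
    · exact h4231 (containsPattern_of_map_fourValues_sublist (by decide)
        hca hda hdb ((hs.cons_cons b).cons_cons a))

/-- Every rectangular permutation `π ∈ S_n` with `n ≥ 2` satisfies `π₁ = 1`, or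
`π₂ = 1`, or `|π₁ − π₂| = 1`, where `π₁, π₂` are its first two values. -/
theorem rectangular_first_two (n : ℕ) (hn : 2 ≤ n) (w : List ℕ)
    (hperm : IsPermList n w) (hrect : Rectangular w) :
    w.getD 0 0 = 1 ∨ w.getD 1 0 = 1 ∨
      ((w.getD 0 0 : ℤ) - (w.getD 1 0 : ℤ)).natAbs = 1 := by
  by_contra! hcon
  have hlen : w.length = n := by simpa using hperm.length_eq
  obtain ⟨a, b, t, rfl⟩ : ∃ a b t, w = a :: b :: t := by
    rcases w with _ | ⟨a, _ | ⟨b, t⟩⟩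
    · simp at hlen; omega
    · simp at hlen; omega
    · exact ⟨a, b, t, rfl⟩
  simp only [List.getD_cons_zero, List.getD_cons_succ] at hcon
  obtain ⟨ha₁, hb₁, hab₁⟩ := hcon
  have hab : a ≠ b := by
    rintro rfl
    exact (List.nodup_cons.1 hperm.nodup).1 List.mem_cons_self
  have ha := hperm.mem_iff.1 (List.mem_cons_self (a := a))
  have hb := hperm.mem_iff.1 (List.mem_cons_of_mem a List.mem_cons_self)
  have mem_tail : ∀ v, 1 ≤ v → v ≤ n → v ≠ a → v ≠ b → v ∈ t := by
    intro v hv₁ hvn hva hvb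
    simpa [hva, hvb] using hperm.mem_iff.2 ⟨hv₁, hvn⟩
  exact hrect.not_straddled_head (c := 1) (d := min a b + 1)
    (mem_tail 1 le_rfl (by omega) (Ne.symm ha₁) (Ne.symm hb₁))
    (mem_tail _ (by omega) (by omega) (by omega) (by omega)) (by omega) (by omega) (by omega)
end
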